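/- arXiv:2405.19961 — 2 statements merged into one kernel-verified Lean document; each statement's English description precedes it below -/
import Mathlib

section
/- Let N be a positive natural number. Let R_t, R_B ∈ ℝ^{3N}, let m, s ∈ ℝ^{3N} have all entries strictly positive, and let S be a set of maps ℝ^{3N} → ℝ^{3N} (the admissible alignments). Let ρ_t ∈ S satisfy ρ_t(R_B) ≠ R_t and ‖R_t − ρ_t(R_B)‖ ≤ ‖R_t − ρ(R_B)‖ for all ρ ∈ S (ρ_t is an optimal alignment of R_B to R_t). Define the bias force b := diag(s)(ρ_t(R_B) − R_t), where diag(s) acts componentwise, and the updated position R'_{t+Δt} := R_t + Δt·(b/m) with b/m the componentwise quotient. Then there exists Δt > 0 such that for every ρ'_{t+Δt} ∈ S satisfying ‖R'_{t+Δt} − ρ'_{t+Δt}(R_B)‖ ≤ ‖R'_{t+Δt} − ρ(R_B)‖ for all ρ ∈ S (an optimal alignment of R_B to R'_{t+Δt}), the strict inequality ‖ρ'_{t+Δt}(R_B) − R'_{t+Δt}‖ < ‖ρ_t(R_B) − R_t‖ holds. -/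
/-!
With the step size `Δt = (1 + ∑ᵢ sᵢ / mᵢ)⁻¹` every coordinate of the displacement
`R' Δt - ρt RB` is that of `Rt - ρt RB` multiplied by `1 - Δt sᵢ / mᵢ ∈ (0, 1)`, so the
old alignment `ρt` is already strictly closer to the new position than to the old one.
An optimal alignment `ρ'` of the new position does at least as well as `ρt`.
-/

open Finset

theorem EuclideanSpace.norm_lt_of_coord_eq_mul {ι : Type*} [Fintype ι]
    {v w : EuclideanSpace ℝ ι} (c : ι → ℝ) (hc : ∀ i, |c i| < 1)
    (hw : ∀ i, w i = c i * v i) (hv : v ≠ 0) : ‖w‖ < ‖v‖ := by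
  obtain ⟨j, hj⟩ : ∃ j, v j ≠ 0 := by
    by_contra! h
    exact hv (PiLp.ext h)
  have hcoord_le (i : ι) : w i ^ 2 ≤ v i ^ 2 := by
    rw [hw i, mul_pow, ← sq_abs (c i)]
    exact mul_le_of_le_one_left (sq_nonneg _) (pow_le_one₀ (abs_nonneg _) (hc i).le)
  have hcoord_lt : w j ^ 2 < v j ^ 2 := by
    rw [hw j, mul_pow, ← sq_abs (c j)]
    exact mul_lt_of_lt_one_left (sq_pos_of_ne_zero hj)
      (pow_lt_one₀ (abs_nonneg _) (hc j) two_ne_zero)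
  have hsq : ‖w‖ ^ 2 < ‖v‖ ^ 2 := by
    simp only [EuclideanSpace.real_norm_sq_eq]
    exact sum_lt_sum (fun i _ => hcoord_le i) ⟨j, mem_univ j, hcoord_lt⟩
  exact lt_of_pow_lt_pow_left₀ 2 (norm_nonneg v) hsq

theorem inv_one_add_sum_mul_lt_one {ι : Type*} [Fintype ι] {a : ι → ℝ}
    (ha : ∀ i, 0 ≤ a i) (j : ι) : (1 + ∑ i, a i)⁻¹ * a j < 1 := by
  have hpos : 0 < 1 + ∑ i, a i := add_pos_of_pos_of_nonneg one_pos (sum_nonneg fun i _ => ha i)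
  rw [inv_mul_lt_iff₀ hpos, mul_one]
  linarith [single_le_sum (fun i _ => ha i) (mem_univ j)]

theorem scale_bias_step_decreases_aligned_distance_general (N : ℕ)
    (Rt RB : EuclideanSpace ℝ (Fin (3 * N)))
    (m s : Fin (3 * N) → ℝ) (hm : ∀ i, 0 < m i) (hs : ∀ i, 0 < s i)
    (S : Set (EuclideanSpace ℝ (Fin (3 * N)) → EuclideanSpace ℝ (Fin (3 * N))))
    (ρt : EuclideanSpace ℝ (Fin (3 * N)) → EuclideanSpace ℝ (Fin (3 * N)))
    (hρt : ρt ∈ S) (hne : ρt RB ≠ Rt)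
    (b : EuclideanSpace ℝ (Fin (3 * N)))
    (hb : ∀ i, b i = s i * (ρt RB i - Rt i))
    (R' : ℝ → EuclideanSpace ℝ (Fin (3 * N)))
    (hR' : ∀ Δt : ℝ, ∀ i, R' Δt i = Rt i + Δt * (b i / m i)) :
    ∃ Δt > (0 : ℝ), ∀ ρ' ∈ S,
      (∀ ρ ∈ S, ‖R' Δt - ρ' RB‖ ≤ ‖R' Δt - ρ RB‖) →
      ‖ρ' RB - R' Δt‖ < ‖ρt RB - Rt‖ := by
  have hratio (i : Fin (3 * N)) : 0 < s i / m i := div_pos (hs i) (hm i)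
  set Δt := (1 + ∑ i, s i / m i)⁻¹
  have hΔt : 0 < Δt :=
    inv_pos.mpr (add_pos_of_pos_of_nonneg one_pos (sum_nonneg fun i _ => (hratio i).le))
  have hfactor (i : Fin (3 * N)) : |1 - Δt * (s i / m i)| < 1 := by
    have hlt := inv_one_add_sum_mul_lt_one (fun i => (hratio i).le) i
    have hpos : 0 < Δt * (s i / m i) := mul_pos hΔt (hratio i)
    rw [abs_lt]
    constructor <;> linarith
  have hdisplacement (i : Fin (3 * N)) :
      (R' Δt - ρt RB) i = (1 - Δt * (s i / m i)) * (Rt - ρt RB) i := by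
    simp only [PiLp.sub_apply, hR', hb]
    field_simp
    ring
  have hcloser : ‖R' Δt - ρt RB‖ < ‖Rt - ρt RB‖ :=
    EuclideanSpace.norm_lt_of_coord_eq_mul _ hfactor hdisplacement (sub_ne_zero.mpr hne.symm)
  refine ⟨Δt, hΔt, fun ρ' _ hopt' => ?_⟩
  calc ‖ρ' RB - R' Δt‖ = ‖R' Δt - ρ' RB‖ := norm_sub_rev _ _
    _ ≤ ‖R' Δt - ρt RB‖ := hopt' ρt hρt
    _ < ‖Rt - ρt RB‖ := hcloser
    _ = ‖ρt RB - Rt‖ := norm_sub_rev _ _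

/-- Proposition of Appendix A.3: with the scale-based bias force, there exists
a small enough step size strictly decreasing the optimally-aligned distance to
the target configuration. -/
theorem scale_bias_step_decreases_aligned_distance (N : ℕ) (hN : 0 < N)
    (Rt RB : EuclideanSpace ℝ (Fin (3 * N)))
    (m s : Fin (3 * N) → ℝ) (hm : ∀ i, 0 < m i) (hs : ∀ i, 0 < s i)
    (S : Set (EuclideanSpace ℝ (Fin (3 * N)) → EuclideanSpace ℝ (Fin (3 * N))))
    (ρt : EuclideanSpace ℝ (Fin (3 * N)) → EuclideanSpace ℝ (Fin (3 * N)))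
    (hρt : ρt ∈ S) (hne : ρt RB ≠ Rt)
    (hopt : ∀ ρ ∈ S, ‖Rt - ρt RB‖ ≤ ‖Rt - ρ RB‖)
    (b : EuclideanSpace ℝ (Fin (3 * N)))
    (hb : ∀ i, b i = s i * (ρt RB i - Rt i))
    (R' : ℝ → EuclideanSpace ℝ (Fin (3 * N)))
    (hR' : ∀ Δt : ℝ, ∀ i, R' Δt i = Rt i + Δt * (b i / m i)) :
    ∃ Δt > (0 : ℝ), ∀ ρ' ∈ S,
      (∀ ρ ∈ S, ‖R' Δt - ρ' RB‖ ≤ ‖R' Δt - ρ RB‖) →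
      ‖ρ' RB - R' Δt‖ < ‖ρt RB - Rt‖ :=
  scale_bias_step_decreases_aligned_distance_general N Rt RB m s hm hs S ρt hρt hne b hb R' hR'
end

section
/- Let n and L be positive natural numbers, Δt > 0, and let Σ be an invertible n × n real matrix. Let x_0, x_1, …, x_L ∈ ℝⁿ be a path, let u, v, v̄ : ℝⁿ → ℝⁿ, and define for each ℓ ∈ {0, …, L−1} the discretized noise ε_ℓ := Σ^{-1}(x_{ℓ+1} − x_ℓ − (u(x_ℓ) + Σ v̄(x_ℓ))·Δt). Define the unnormalized log-likelihood of the path under drift w : ℝⁿ → ℝⁿ as ℒ_w := −(1/(2Δt)) ∑_{ℓ=0}^{L−1} ‖Σ^{-1}(x_{ℓ+1} − x_ℓ − (u(x_ℓ) + Σ w(x_ℓ))·Δt)‖². Then ℒ_0 − ℒ_v = (1/2) ∑_{ℓ=0}^{L−1} ‖v(x_ℓ)‖²·Δt − ∑_{ℓ=0}^{L−1} ⟨v(x_ℓ), v̄(x_ℓ)⟩·Δt − ∑_{ℓ=0}^{L−1} ⟨v(x_ℓ), ε_ℓ⟩, where ℒ_0 denotes the log-likelihood with w = 0 (the unbiased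 drift u) and ℒ_v the one with w = v. In other words, the difference of path log-likelihoods equals the discretized Girsanov functional F̂_{v, v̄}(x_{0:L}) minus its terminal reward term. -/
open scoped RealInnerProductSpace

lemma toEuclideanLin_inv_apply {n : ℕ} (A : Matrix (Fin n) (Fin n) ℝ) (hA : IsUnit A)
    (z : EuclideanSpace ℝ (Fin n)) :
    Matrix.toEuclideanLin A⁻¹ (Matrix.toEuclideanLin A z) = z := by
  simp only [Matrix.toEuclideanLin_apply, Equiv.apply_symm_apply, Matrix.mulVec_mulVec]
  rw [Matrix.nonsing_inv_mul A ((Matrix.isUnit_iff_isUnit_det A).mp hA)]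
  simp

/-- Path-level identity of Appendix A.2: the difference of discretized path
log-likelihoods under the unbiased and biased drifts equals the discretized
Girsanov functional (without the terminal reward term). -/
theorem path_log_likelihood_difference (n L : ℕ) (hn : 0 < n) (hL : 0 < L)
    (Δt : ℝ) (hΔt : 0 < Δt)
    (A : Matrix (Fin n) (Fin n) ℝ) (hA : IsUnit A)
    (x : Fin (L + 1) → EuclideanSpace ℝ (Fin n))
    (u v vb : EuclideanSpace ℝ (Fin n) → EuclideanSpace ℝ (Fin n))
    (ε : Fin L → EuclideanSpace ℝ (Fin n))
    (hε : ∀ ℓ : Fin L, ε ℓ =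
      Matrix.toEuclideanLin A⁻¹
        (x ℓ.succ - x ℓ.castSucc
          - Δt • (u (x ℓ.castSucc) + Matrix.toEuclideanLin A (vb (x ℓ.castSucc)))))
    (ℒ : (EuclideanSpace ℝ (Fin n) → EuclideanSpace ℝ (Fin n)) → ℝ)
    (hℒ : ∀ w : EuclideanSpace ℝ (Fin n) → EuclideanSpace ℝ (Fin n),
      ℒ w = -(1 / (2 * Δt)) * ∑ ℓ : Fin L,
        ‖Matrix.toEuclideanLin A⁻¹
          (x ℓ.succ - x ℓ.castSucc
            - Δt • (u (x ℓ.castSucc) + Matrix.toEuclideanLin A (w (x ℓ.castSucc))))‖ ^ 2) :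
    ℒ 0 - ℒ v
      = (1 / 2) * ∑ ℓ : Fin L, ‖v (x ℓ.castSucc)‖ ^ 2 * Δt
        - ∑ ℓ : Fin L, ⟪v (x ℓ.castSucc), vb (x ℓ.castSucc)⟫ * Δt
        - ∑ ℓ : Fin L, ⟪v (x ℓ.castSucc), ε ℓ⟫ := by
  set T := Matrix.toEuclideanLin A with hT
  set Ti := Matrix.toEuclideanLin A⁻¹ with hTi
  -- the argument vectors for w = 0 and w = v
  have harg0 : ∀ ℓ : Fin L,
      Ti (x ℓ.succ - x ℓ.castSucc
        - Δt • (u (x ℓ.castSucc) + T ((0 : EuclideanSpace ℝ (Fin n) → EuclideanSpace ℝ (Fin n)) (x ℓ.castSucc))))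
      = ε ℓ + Δt • vb (x ℓ.castSucc) := by
    intro ℓ
    have hTT : Ti (T (vb (x ℓ.castSucc))) = vb (x ℓ.castSucc) :=
      toEuclideanLin_inv_apply A hA _
    simp only [Pi.zero_apply, map_zero, add_zero]
    have e : x ℓ.succ - x ℓ.castSucc - Δt • u (x ℓ.castSucc)
        = (x ℓ.succ - x ℓ.castSucc
            - Δt • (u (x ℓ.castSucc) + T (vb (x ℓ.castSucc))))
          + Δt • T (vb (x ℓ.castSucc)) := by
      rw [smul_add]; abel
    rw [e, map_add, map_smul, hTT, ← hε ℓ]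
  have hargv : ∀ ℓ : Fin L,
      Ti (x ℓ.succ - x ℓ.castSucc
        - Δt • (u (x ℓ.castSucc) + T (v (x ℓ.castSucc))))
      = ε ℓ + Δt • vb (x ℓ.castSucc) - Δt • v (x ℓ.castSucc) := by
    intro ℓ
    have h := hε ℓ
    have hTT : Ti (T (vb (x ℓ.castSucc))) = vb (x ℓ.castSucc) :=
      toEuclideanLin_inv_apply A hA _
    have hTv : Ti (T (v (x ℓ.castSucc))) = v (x ℓ.castSucc) :=
      toEuclideanLin_inv_apply A hA _
    have key : x ℓ.succ - x ℓ.castSucc - Δt • (u (x ℓ.castSucc) + T (v (x ℓ.castSucc)))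
        = (x ℓ.succ - x ℓ.castSucc
            - Δt • (u (x ℓ.castSucc) + T (vb (x ℓ.castSucc))))
          + Δt • T (vb (x ℓ.castSucc)) - Δt • T (v (x ℓ.castSucc)) := by
      simp only [smul_add]; abel
    rw [key, map_sub, map_add, map_smul, map_smul, hTT, hTv, ← h]
  rw [hℒ 0, hℒ v]
  have hterm : ∀ ℓ : Fin L,
      -(1 / (2 * Δt)) * (‖ε ℓ + Δt • vb (x ℓ.castSucc)‖ ^ 2
        - ‖ε ℓ + Δt • vb (x ℓ.castSucc) - Δt • v (x ℓ.castSucc)‖ ^ 2)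
      = (1 / 2) * (‖v (x ℓ.castSucc)‖ ^ 2 * Δt)
        - ⟪v (x ℓ.castSucc), vb (x ℓ.castSucc)⟫ * Δt
        - ⟪v (x ℓ.castSucc), ε ℓ⟫ := by
    intro ℓ
    set a := ε ℓ + Δt • vb (x ℓ.castSucc) with ha
    set b := v (x ℓ.castSucc)
    have hexp : ‖a - Δt • b‖ ^ 2
        = ‖a‖ ^ 2 - 2 * ⟪a, Δt • b⟫ + ‖Δt • b‖ ^ 2 := norm_sub_sq_real a (Δt • b)
    have hinner : ⟪a, Δt • b⟫ = Δt * (⟪b, ε ℓ⟫ + Δt * ⟪b, vb (x ℓ.castSucc)⟫) := by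
      rw [ha, real_inner_smul_right, inner_add_left, real_inner_smul_left]
      rw [real_inner_comm (ε ℓ) b, real_inner_comm (vb (x ℓ.castSucc)) b]
    have hns : ‖Δt • b‖ ^ 2 = Δt ^ 2 * ‖b‖ ^ 2 := by
      rw [norm_smul]; simp [abs_of_pos hΔt]; ring
    rw [hexp, hinner, hns]
    field_simp
    ring
  calc -(1 / (2 * Δt)) * ∑ ℓ : Fin L,
        ‖Ti (x ℓ.succ - x ℓ.castSucc
          - Δt • (u (x ℓ.castSucc) + T ((0 : EuclideanSpace ℝ (Fin n) → EuclideanSpace ℝ (Fin n)) (x ℓ.castSucc))))‖ ^ 2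
      - -(1 / (2 * Δt)) * ∑ ℓ : Fin L,
        ‖Ti (x ℓ.succ - x ℓ.castSucc
          - Δt • (u (x ℓ.castSucc) + T (v (x ℓ.castSucc))))‖ ^ 2
      = ∑ ℓ : Fin L, -(1 / (2 * Δt)) * (‖ε ℓ + Δt • vb (x ℓ.castSucc)‖ ^ 2
          - ‖ε ℓ + Δt • vb (x ℓ.castSucc) - Δt • v (x ℓ.castSucc)‖ ^ 2) := by
        simp only [harg0, hargv]
        rw [← Finset.mul_sum, Finset.sum_sub_distrib]; ring
    _ = ∑ ℓ : Fin L, ((1 / 2) * (‖v (x ℓ.castSucc)‖ ^ 2 * Δt)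
          - ⟪v (x ℓ.castSucc), vb (x ℓ.castSucc)⟫ * Δt
          - ⟪v (x ℓ.castSucc), ε ℓ⟫) := Finset.sum_congr rfl (fun ℓ _ => hterm ℓ)
    _ = (1 / 2) * ∑ ℓ : Fin L, ‖v (x ℓ.castSucc)‖ ^ 2 * Δt
        - ∑ ℓ : Fin L, ⟪v (x ℓ.castSucc), vb (x ℓ.castSucc)⟫ * Δt
        - ∑ ℓ : Fin L, ⟪v (x ℓ.castSucc), ε ℓ⟫ := by
        rw [Finset.sum_sub_distrib, Finset.sum_sub_distrib, Finset.mul_sum]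
end
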